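/- arXiv:0808.2417 — 3 statements merged into one kernel-verified Lean document; each statement's English description precedes it below -/
import Mathlib

section
/- A nonempty regular language L is factorial (i.e., every factor/contiguous subword of every word in L is in L) if and only if L is accepted by some NFA in which every state is both initial and final. -/
theorem aux_nfa_evalFrom_append {α σ : Type*} (M : NFA α σ) (S : Set σ) (x y : List α) :
    M.evalFrom S (x ++ y) = M.evalFrom (M.evalFrom S x) y := by
  simp [NFA.evalFrom, List.foldl_append]

theorem aux_nfa_evalFrom_mono {α σ : Type*} (M : NFA α σ) {S T : Set σ} (h : S ⊆ T)
    (x : List α) : M.evalFrom S x ⊆ M.evalFrom T x := by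
  induction x generalizing S T with
  | nil => simpa using h
  | cons a x ih =>
    show M.evalFrom (M.stepSet S a) x ⊆ M.evalFrom (M.stepSet T a) x
    refine ih ?_
    intro s hs
    rw [NFA.mem_stepSet] at hs ⊢
    obtain ⟨t, ht, h2⟩ := hs
    exact ⟨t, h ht, h2⟩

theorem aux_nfa_evalFrom_nonempty {α σ : Type*} (M : NFA α σ) {S : Set σ} {x : List α}
    (h : (M.evalFrom S x).Nonempty) : S.Nonempty := by
  induction x generalizing S with
  | nil => simpa using h
  | cons a x ih =>
    have h' : (M.stepSet S a).Nonempty := ih h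
    obtain ⟨s, hs⟩ := h'
    rw [NFA.mem_stepSet] at hs
    obtain ⟨t, ht, _⟩ := hs
    exact ⟨t, ht⟩

theorem factorial_iff_nfa_all_initial_final {α : Type} (L : Language α)
    (hreg : L.IsRegular) (hne : ∃ w, w ∈ L) :
    (∀ w ∈ L, ∀ u, u <:+: w → u ∈ L) ↔
      ∃ (σ : Type) (_ : Fintype σ) (M : NFA α σ),
        M.start = Set.univ ∧ M.accept = Set.univ ∧ M.accepts = L := by
  constructor
  · intro hfac
    obtain ⟨σ, fσ, D, hD⟩ := hreg
    -- states lying on some accepting path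
    set P : σ → Prop := fun q => ∃ u v, D.eval u = q ∧ u ++ v ∈ L with hP
    set N : NFA α {q // P q} :=
      ⟨fun q a => {q' | (q' : σ) = D.step (q : σ) a}, Set.univ, Set.univ⟩ with hN
    haveI : Fintype {q // P q} := Fintype.ofFinite _
    -- soundness of paths
    have sound : ∀ (w : List α) (S : Set {q // P q}) (s : {q // P q}),
        s ∈ N.evalFrom S w → ∃ q0 ∈ S, (s : σ) = D.evalFrom (q0 : σ) w := by
      intro w
      induction w with
      | nil => intro S s hs; exact ⟨s, by simpa using hs, rfl⟩
      | cons a w ih =>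
        intro S s hs
        have hs' : s ∈ N.evalFrom (N.stepSet S a) w := hs
        obtain ⟨q1, hq1, hval⟩ := ih _ _ hs'
        rw [NFA.mem_stepSet] at hq1
        obtain ⟨q0, hq0, hstep⟩ := hq1
        refine ⟨q0, hq0, ?_⟩
        have : (q1 : σ) = D.step (q0 : σ) a := hstep
        rw [hval, this]
        rfl
    -- completeness
    have compl : ∀ (v u : List α), u ++ v ∈ L → ∀ (h : P (D.eval u)),
        (N.evalFrom {⟨D.eval u, h⟩} v).Nonempty := by
      intro v
      induction v with
      | nil => intro u _ h; exact ⟨⟨D.eval u, h⟩, by simp⟩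
      | cons a v ih =>
        intro u hL h
        have hL' : (u ++ [a]) ++ v ∈ L := by simpa [List.append_assoc] using hL
        have h' : P (D.eval (u ++ [a])) := ⟨u ++ [a], v, rfl, hL'⟩
        have hsub : ({⟨D.eval (u ++ [a]), h'⟩} : Set {q // P q}) ⊆
            N.stepSet {⟨D.eval u, h⟩} a := by
          intro s hs
          rw [Set.mem_singleton_iff] at hs
          rw [NFA.mem_stepSet]
          refine ⟨⟨D.eval u, h⟩, rfl, ?_⟩
          subst hs
          show (D.eval (u ++ [a]) : σ) = D.step (D.eval u) a
          simp
        obtain ⟨s, hsmem⟩ := ih (u ++ [a]) hL' h'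
        exact ⟨s, aux_nfa_evalFrom_mono N hsub v hsmem⟩
    refine ⟨{q // P q}, inferInstance, N, rfl, rfl, ?_⟩
    ext w
    constructor
    · -- soundness: accepted words are factors of words of L
      rintro ⟨s, -, hs⟩
      obtain ⟨q0, -, hval⟩ := sound w Set.univ s hs
      obtain ⟨u, v, hu, huv⟩ := q0.2
      obtain ⟨u', v', hu', hu'v'⟩ := s.2
      have key : D.eval (u ++ w) = D.eval u' := by
        rw [show D.eval (u ++ w) = D.evalFrom (D.eval u) w from
          DFA.evalFrom_of_append _ _ _ _, hu, ← hval, hu']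
      have hmem : (u ++ w) ++ v' ∈ L := by
        rw [← hD] at hu'v' ⊢
        rw [DFA.mem_accepts] at hu'v' ⊢
        rw [show D.eval ((u ++ w) ++ v') = D.evalFrom (D.eval (u ++ w)) v' from
          DFA.evalFrom_of_append _ _ _ _, key]
        rw [show D.eval (u' ++ v') = D.evalFrom (D.eval u') v' from
          DFA.evalFrom_of_append _ _ _ _] at hu'v'
        exact hu'v'
      exact hfac _ hmem w ⟨u, v', by simp⟩
    · -- completeness
      intro hw
      have h0 : P (D.eval []) := ⟨[], w, rfl, by simpa using hw⟩
      have hL0 : ([] : List α) ++ w ∈ L := by simpa using hw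
      obtain ⟨s, hsmem⟩ := compl w [] hL0 h0
      refine ⟨s, Set.mem_univ s, ?_⟩
      exact aux_nfa_evalFrom_mono N (Set.subset_univ _) w hsmem
  · rintro ⟨σ, fσ, M, hstart, haccept, hacc⟩ w hw u hu
    obtain ⟨a, b, hab⟩ := hu
    rw [← hacc] at hw ⊢
    obtain ⟨s, -, hs⟩ := hw
    rw [← hab] at hs
    rw [show M.eval (a ++ u ++ b) = M.evalFrom M.start (a ++ u ++ b) from rfl, hstart] at hs
    rw [show a ++ u ++ b = (a ++ u) ++ b from rfl, aux_nfa_evalFrom_append,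
      aux_nfa_evalFrom_append] at hs
    have h1 : (M.evalFrom (M.evalFrom Set.univ a) u).Nonempty :=
      aux_nfa_evalFrom_nonempty M ⟨s, hs⟩
    obtain ⟨t, ht⟩ := h1
    have ht' : t ∈ M.evalFrom Set.univ u :=
      aux_nfa_evalFrom_mono M (Set.subset_univ _) u ht
    rw [← hstart] at ht'
    exact ⟨t, haccept ▸ Set.mem_univ t, ht'⟩
end

section
/- Let M be an NFA over alphabet Σ and let M' be obtained from M by adding a new symbol # with a transition on # from each final state of M back to the initial state q₀, and then making all states of M' final. Then L(M) = Σ* if and only if L(M') = (Σ ∪ {#})*. -/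
/-!
Reading a word `w` over `Σ` letter by letter, `M'` does exactly what `M` does, and reading `#`
from a set of states `S` leads to `{q₀}` or `∅` according to whether `S` meets `F`.
If `L(M) = Σ*`, then by induction on `x ∈ (Σ ∪ {#})*` the states reached by `M'` on `x` contain
the states reached by `M` on some `w ∈ Σ*`, in particular an accepting state of `M`; so `M'` never
gets stuck and, all its states being final, accepts `x`. Conversely, if `M'` accepts `w#`, the
run on `w` reaches a state of `F`, so `w ∈ L(M)`.
-/

namespace NFA

variable {α σ : Type*}

theorem stepSet_mono (M : NFA α σ) {S T : Set σ} (h : S ⊆ T) (a : α) :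
    M.stepSet S a ⊆ M.stepSet T a :=
  Set.biUnion_subset_biUnion_left h

theorem mem_accepts_iff_eval_nonempty {M : NFA α σ} (hacc : M.accept = Set.univ) {x : List α} :
    x ∈ M.accepts ↔ (M.eval x).Nonempty := by
  simp [mem_accepts, hacc, eval, Set.Nonempty]

variable {M : NFA α σ} {N : NFA (Option α) σ}

theorem stepSet_some (hstep : ∀ q a, N.step q (some a) = M.step q a) (S : Set σ) (a : α) :
    N.stepSet S (some a) = M.stepSet S a := by
  simp only [stepSet, hstep]

theorem evalFrom_map_some (hstep : ∀ q a, N.step q (some a) = M.step q a) (S : Set σ)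
    (w : List α) : N.evalFrom S (w.map some) = M.evalFrom S w := by
  induction w generalizing S with
  | nil => rfl
  | cons a w ih => rw [List.map_cons, evalFrom_cons, evalFrom_cons, stepSet_some hstep, ih]

variable {q₀ : σ} [DecidablePred (· ∈ M.accept)]

theorem mem_accept_of_mem_step_none
    (hsharp : ∀ q, N.step q none = (if q ∈ M.accept then {q₀} else ∅ : Set σ))
    {p q : σ} (h : p ∈ N.step q none) : q ∈ M.accept := by
  by_contra hq
  simp [hsharp, hq] at h

theorem mem_stepSet_none_of_mem_accept
    (hsharp : ∀ q, N.step q none = (if q ∈ M.accept then {q₀} else ∅ : Set σ))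
    {S : Set σ} {q : σ} (hqS : q ∈ S) (hq : q ∈ M.accept) : q₀ ∈ N.stepSet S none :=
  mem_stepSet.2 ⟨q, hqS, by simp [hsharp, hq]⟩

theorem exists_eval_subset_eval (huniv : M.accepts = ⊤)
    (hstep : ∀ q a, N.step q (some a) = M.step q a)
    (hsharp : ∀ q, N.step q none = (if q ∈ M.accept then {q₀} else ∅ : Set σ))
    (hstart : M.start = {q₀}) (hstart' : N.start = {q₀}) (x : List (Option α)) :
    ∃ w, M.eval w ⊆ N.eval x := by
  induction x using List.reverseRecOn with
  | nil => exact ⟨[], by simp [eval, hstart, hstart']⟩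
  | append_singleton x a ih =>
    obtain ⟨w, hw⟩ := ih
    rcases a with _ | b
    · obtain ⟨q, hq, hqw⟩ := mem_accepts.1 (huniv ▸ trivial : w ∈ M.accepts)
      refine ⟨[], ?_⟩
      rw [eval_nil, hstart, eval_append_singleton, Set.singleton_subset_iff]
      exact mem_stepSet_none_of_mem_accept hsharp (hw hqw) hq
    · refine ⟨w ++ [b], ?_⟩
      rw [eval_append_singleton, eval_append_singleton, ← stepSet_some hstep]
      exact N.stepSet_mono hw _

theorem mem_accepts_of_append_none_mem_accepts
    (hstep : ∀ q a, N.step q (some a) = M.step q a)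
    (hsharp : ∀ q, N.step q none = (if q ∈ M.accept then {q₀} else ∅ : Set σ))
    (hstart : M.start = N.start) {w : List α} (hw : w.map some ++ [none] ∈ N.accepts) :
    w ∈ M.accepts := by
  obtain ⟨_, -, hp⟩ := hw
  rw [eval, evalFrom_append, evalFrom_map_some hstep, evalFrom_singleton, mem_stepSet] at hp
  obtain ⟨q, hqw, hq⟩ := hp
  exact mem_accepts.2 ⟨q, mem_accept_of_mem_step_none hsharp hq, hstart ▸ hqw⟩

end NFA

open Classical in

theorem asf_construction_universality {α σ : Type} (M : NFA α σ) (q₀ : σ)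
    (hstart : M.start = {q₀})
    (M' : NFA (Option α) σ)
    (hstep : ∀ q a, M'.step q (some a) = M.step q a)
    (hsharp : ∀ q, M'.step q none = (if q ∈ M.accept then {q₀} else ∅ : Set σ))
    (hstart' : M'.start = {q₀}) (hacc' : M'.accept = Set.univ) :
    M.accepts = ⊤ ↔ M'.accepts = ⊤ := by
  constructor
  · intro huniv
    refine Language.ext fun x => iff_of_true ?_ trivial
    obtain ⟨w, hw⟩ := NFA.exists_eval_subset_eval huniv hstep hsharp hstart hstart' x
    obtain ⟨q, -, hq⟩ := NFA.mem_accepts.1 (huniv ▸ trivial : w ∈ M.accepts)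
    exact (NFA.mem_accepts_iff_eval_nonempty hacc').2 ⟨q, hw hq⟩
  · intro huniv'
    refine Language.ext fun w => iff_of_true ?_ trivial
    exact NFA.mem_accepts_of_append_none_mem_accepts hstep hsharp (hstart.trans hstart'.symm)
      (huniv' ▸ trivial)
end

section
/- If an NFA M with n states accepts a word w such that some prefix w' of w is not accepted by M, then M accepts some word of length less than 2^(n+1) having a prefix not accepted by M. Hence if L(M) is not prefix-closed, a witness of length < 2^(n+1) exists. -/
private lemma nfa_evalFrom_append {α σ : Type} (M : NFA α σ) (S : Set σ) (x y : List α) :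
    M.evalFrom S (x ++ y) = M.evalFrom (M.evalFrom S x) y := by
  simp [NFA.evalFrom, List.foldl_append]

private lemma nfa_accepts_congr {α σ : Type} (M : NFA α σ) {x y : List α}
    (h : M.eval x = M.eval y) : x ∈ M.accepts ↔ y ∈ M.accepts := by
  rw [NFA.mem_accepts, NFA.mem_accepts]
  show (∃ S ∈ M.accept, S ∈ M.eval x) ↔ (∃ S ∈ M.accept, S ∈ M.eval y)
  rw [h]

/-- pumping: cutting between equal eval-sets preserves eval. -/
private lemma nfa_pump {α σ : Type} (M : NFA α σ) (w : List α) {a b : ℕ}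
    (hb : b ≤ w.length)
    (heq : M.eval (w.take a) = M.eval (w.take b)) :
    M.eval (w.take a ++ w.drop b) = M.eval w := by
  have h1 : M.eval (w.take a ++ w.drop b)
      = M.evalFrom (M.eval (w.take a)) (w.drop b) := nfa_evalFrom_append M _ _ _
  have h2 : M.eval (w.take b ++ w.drop b)
      = M.evalFrom (M.eval (w.take b)) (w.drop b) := nfa_evalFrom_append M _ _ _
  rw [h1, heq, ← h2, List.take_append_drop]

private lemma pigeon {α σ : Type} [Fintype σ] (M : NFA α σ) (w : List α) (lo : ℕ)
    (hlen : lo + 2 ^ Fintype.card σ ≤ w.length) :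
    ∃ a b, lo ≤ a ∧ a < b ∧ b ≤ lo + 2 ^ Fintype.card σ ∧
      M.eval (w.take a) = M.eval (w.take b) := by
  classical
  have hcard : (Finset.univ : Finset (Set σ)).card <
      (Finset.Icc lo (lo + 2 ^ Fintype.card σ)).card := by
    rw [Nat.card_Icc, Finset.card_univ, Fintype.card_set]
    omega
  obtain ⟨x, hx, y, hy, hxy, hfxy⟩ :=
    Finset.exists_ne_map_eq_of_card_lt_of_maps_to hcard
      (f := fun i => M.eval (w.take i)) (fun a _ => Finset.mem_univ _)
  simp only [Finset.mem_Icc] at hx hy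
  rcases lt_or_gt_of_ne hxy with h | h
  · exact ⟨x, y, hx.1, h, hy.2, hfxy⟩
  · exact ⟨y, x, hy.1, h, hx.2, hfxy.symm⟩

private lemma aux {α σ : Type} [Fintype σ] (M : NFA α σ) :
    ∀ n (w : List α), w.length ≤ n → w ∈ M.accepts →
    ∀ w', w' <+: w → w' ∉ M.accepts →
    ∃ v ∈ M.accepts, v.length < 2 ^ (Fintype.card σ + 1) ∧
      ∃ v', v' <+: v ∧ v' ∉ M.accepts := by
  intro n
  induction n with
  | zero =>
    intro w hlen hw w' hpre hw'
    exact ⟨w, hw, lt_of_le_of_lt hlen (pow_pos two_pos _), w', hpre, hw'⟩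
  | succ n ih =>
    intro w hlen hw w' hpre hw'
    by_cases hshort : w.length < 2 ^ (Fintype.card σ + 1)
    · exact ⟨w, hw, hshort, w', hpre, hw'⟩
    push_neg at hshort
    have hwtake : w' = w.take w'.length := (List.prefix_iff_eq_take.mp hpre)
    set l := w'.length with hl
    have hll : l ≤ w.length := hpre.length_le
    have hpow : 2 ^ (Fintype.card σ + 1) = 2 ^ Fintype.card σ + 2 ^ Fintype.card σ := by ring
    by_cases hcase : 2 ^ Fintype.card σ ≤ l
    · -- cut inside the prefix w'
      obtain ⟨a, b, _, hab, hb2, heq⟩ := pigeon M w 0 (by omega)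
      simp only [Nat.zero_add] at hb2
      have hbl : b ≤ l := le_trans hb2 hcase
      have hbw : b ≤ w.length := le_trans hbl hll
      set v := w.take a ++ w.drop b with hv
      have hvacc : v ∈ M.accepts :=
        (nfa_accepts_congr M (nfa_pump M w hbw heq)).mpr hw
      set v' := w.take a ++ (w.take l).drop b with hv'
      have hpre' : v' <+: v := by
        refine (List.prefix_append_right_inj _).mpr ?_
        have : (w.take l).drop b = (w.drop b).take (l - b) := by
          rw [List.take_drop, Nat.add_sub_cancel' hbl]
        rw [this]
        exact List.take_prefix _ _
      have hv'not : v' ∉ M.accepts := by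
        have htt : (w.take l).take b = w.take b := by
          rw [List.take_take]
          congr 1
          omega
        have hsplit : w.take b ++ (w.take l).drop b = w.take l := by
          rw [← htt, List.take_append_drop]
        have heval : M.eval v' = M.eval w' := by
          have h1 : M.eval v' = M.evalFrom (M.eval (w.take a)) ((w.take l).drop b) :=
            nfa_evalFrom_append M _ _ _
          have h2 : M.eval (w.take b ++ (w.take l).drop b)
              = M.evalFrom (M.eval (w.take b)) ((w.take l).drop b) :=
            nfa_evalFrom_append M _ _ _
          rw [h1, heq, ← h2, hsplit, ← hwtake]
        exact fun h => hw' ((nfa_accepts_congr M heval).mp h)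
      have hvlen : v.length ≤ n := by
        have : v.length = a + (w.length - b) := by
          simp [hv, List.length_take, List.length_drop]
          omega
        omega
      exact ih v hvlen hvacc v' hpre' hv'not
    · -- cut after the prefix w'
      push_neg at hcase
      obtain ⟨a, b, hla, hab, hb2, heq⟩ := pigeon M w l (by omega)
      have hbw : b ≤ w.length := by omega
      set v := w.take a ++ w.drop b with hv
      have hvacc : v ∈ M.accepts :=
        (nfa_accepts_congr M (nfa_pump M w hbw heq)).mpr hw
      have hpre' : w' <+: v := by
        have h1 : w' <+: w.take a := by
          rw [hwtake]
          have : (w.take a).take l = w.take l := by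
            rw [List.take_take]
            congr 1
            omega
          rw [← this]
          exact List.take_prefix _ _
        exact h1.trans (List.prefix_append _ _)
      have hvlen : v.length ≤ n := by
        have : v.length = a + (w.length - b) := by
          simp [hv, List.length_take, List.length_drop]
          omega
        omega
      exact ih v hvlen hvacc w' hpre' hw'

theorem short_witness_not_prefix_closed {α σ : Type} [Fintype σ] (M : NFA α σ)
    (w : List α) (hw : w ∈ M.accepts)
    (w' : List α) (hpre : w' <+: w) (hw' : w' ∉ M.accepts) :
    ∃ v ∈ M.accepts, v.length < 2 ^ (Fintype.card σ + 1) ∧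
      ∃ v', v' <+: v ∧ v' ∉ M.accepts := by
  exact aux M w.length w le_rfl hw w' hpre hw'
end
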